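/- arXiv:2504.20470 — 2 statements merged into one kernel-verified Lean document; each statement's English description precedes it below -/
import Mathlib

section
/- Identifiability of principal stratification average causal effects (Theorem 3(c)): Suppose two models (Ω, ℱ, μ, G, A, S⁰, S¹, Y⁰, Y¹) and (Ω', ℱ', μ', G', A', S'⁰, S'¹, Y'⁰, Y'¹) each satisfy Assumption 5, Assumption 7, Assumption 8, and both parts (i) and (ii) of Condition 4, and have the same observed data distribution, i.e. μ(G=g, A=a, S=s, Y=y) = μ'(G'=g, A'=a, S'=s, Y'=y) for all g ∈ Fin m and a, s, y ∈ {0,1}. Then for all (a,b) ∈ {(0,0),(0,1),(1,1)} and every g such that μ(S⁰=a, S¹=b, G=g) > 0 and μ'(S'⁰=a, S'¹=b, G'=g) > 0: PSACE_{ab|g} computed under μ equals PSACE_{ab|g} computed under μ', where PSACE_{ab|g} := P(Y¹=1 | S⁰=a, S¹=b, G=g) − P(Y⁰=1 | S⁰=a, S¹=b, G=g). -/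
open MeasureTheory ProbabilityTheory

/-- Conditional probability `P(E | F) = μ(E ∩ F) / μ(F)` as a real number. -/
noncomputable def condP {Ω : Type*} [MeasurableSpace Ω] (μ : Measure Ω) (E F : Set Ω) : ℝ :=
  (μ (E ∩ F)).toReal / (μ F).toReal

/-!
Within a trial `g`, randomization makes the observed law of `(S, Y)` on the arm `A = a` the law
of `(Sᵃ, Yᵃ)` given `G = g`, so both arms' potential laws are identified. Monotonicity empties
the stratum `(1,0)`, so the stratum weights `π_g(s₀ s₁)` are read off from `P(S¹ = 0 | g)`,
`P(S⁰ = 1 | g)` and `P(S¹ = 1 | g)`. By Assumption 7, `P(S¹ = s, Y¹ = 1 | g)` and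
`P(S⁰ = s, Y⁰ = 1 | g)` are combinations, with the identified weights `π_g`, of the
stratum-level probabilities `P(Yᵛ = 1 | S⁰ = s₀, S¹ = s₁)`, which do not depend on `g`. Letting
`g` vary gives linear systems whose coefficient matrices are those of Condition 4; having rank 2
they determine the stratum-level probabilities, hence every `PSACE_{ab|g}`.
-/

theorem Matrix.mulVec_injective_of_rank_eq_card {K m n : Type*} [Field K] [Fintype n]
    {M : Matrix m n K} (h : M.rank = Fintype.card n) : Function.Injective M.mulVec := by
  rw [Matrix.mulVec_injective_iff, linearIndependent_iff_card_eq_finrank_span, ← h,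
    Matrix.rank_eq_finrank_span_cols, Set.finrank]

theorem Matrix.eq_of_rank_eq_two {ι : Type*} {M : Matrix ι (Fin 2) ℝ} (hM : M.rank = 2)
    {x₀ x₁ y₀ y₁ : ℝ} (h : ∀ i, x₀ * M i 0 + x₁ * M i 1 = y₀ * M i 0 + y₁ * M i 1) :
    x₀ = y₀ ∧ x₁ = y₁ := by
  have hxy : ![x₀, x₁] = ![y₀, y₁] :=
    Matrix.mulVec_injective_of_rank_eq_card (hM.trans (Fintype.card_fin 2).symm) <| funext
      fun i => by simpa [Matrix.mulVec, dotProduct, Fin.sum_univ_two, mul_comm] using h i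
  exact ⟨congrFun hxy 0, congrFun hxy 1⟩

section General

variable {Ω Ω' : Type*} [MeasurableSpace Ω] [MeasurableSpace Ω']

theorem Measurable.bif {β : Type*} [MeasurableSpace β] {A : Ω → Bool} {V₀ V₁ : Ω → β}
    (hA : Measurable A) (hV₀ : Measurable V₀) (hV₁ : Measurable V₁) :
    Measurable fun ω => bif A ω then V₁ ω else V₀ ω := by
  simpa only [Bool.cond_eq_ite] using
    Measurable.ite (p := fun ω => A ω = true) (hA (measurableSet_singleton true)) hV₁ hV₀

theorem ProbabilityTheory.indepFun_of_measureReal_inter_preimage_singleton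
    {α β : Type*} [MeasurableSpace α] [MeasurableSpace β] [Countable α] [Countable β]
    [MeasurableSingletonClass α] [MeasurableSingletonClass β]
    {ν : Measure Ω} [IsFiniteMeasure ν] {X : Ω → α} {Y : Ω → β}
    (hX : Measurable X) (hY : Measurable Y)
    (h : ∀ x y, ν.real (X ⁻¹' {x} ∩ Y ⁻¹' {y}) = ν.real (X ⁻¹' {x}) * ν.real (Y ⁻¹' {y})) :
    IndepFun X Y ν := by
  rw [indepFun_iff_map_prod_eq_prod_map_map hX.aemeasurable hY.aemeasurable]
  refine Measure.ext_of_singleton fun ⟨x, y⟩ => ?_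
  rw [← Set.singleton_prod_singleton, Measure.prod_prod, Measure.map_apply (hX.prodMk hY)
    ((measurableSet_singleton x).prod (measurableSet_singleton y)), Set.mk_preimage_prod,
    Measure.map_apply hX (.singleton _), Measure.map_apply hY (.singleton _),
    ← ENNReal.toReal_eq_toReal_iff' (by finiteness) (by finiteness), ENNReal.toReal_mul]
  exact h x y

theorem ProbabilityTheory.IndepFun.measure_inter_observed_eq_mul {β : Type*}
    [MeasurableSpace β] {ν : Measure Ω} {A : Ω → Bool} {V V₀ V₁ : Ω → β}
    (h : IndepFun A (fun ω => (V₀ ω, V₁ ω)) ν) (hV : ∀ ω, V ω = bif A ω then V₁ ω else V₀ ω)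
    (a : Bool) {B : Set β} (hB : MeasurableSet B) :
    ν ({ω | A ω = a} ∩ V ⁻¹' B) = ν {ω | A ω = a} * ν ((bif a then V₁ else V₀) ⁻¹' B) := by
  have hB' : MeasurableSet {p : β × β | (bif a then p.2 else p.1) ∈ B} := by
    cases a
    · exact measurable_fst hB
    · exact measurable_snd hB
  have hpot : (bif a then V₁ else V₀) ⁻¹' B =
      (fun ω => (V₀ ω, V₁ ω)) ⁻¹' {p | (bif a then p.2 else p.1) ∈ B} := by
    cases a <;> rfl
  have hobs : {ω | A ω = a} ∩ V ⁻¹' B = A ⁻¹' {a} ∩ (bif a then V₁ else V₀) ⁻¹' B := by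
    ext ω
    cases a <;> cases hA : A ω <;> simp [hV, hA]
  rw [hobs, hpot]
  exact h.measure_inter_preimage_eq_mul _ _ (measurableSet_singleton a) hB'

theorem cond_preimage_eq_of_map_eq {γ : Type*} [MeasurableSpace γ]
    {μ : Measure Ω} {μ' : Measure Ω'} {X : Ω → γ} {X' : Ω' → γ}
    (hX : Measurable X) (hX' : Measurable X') (hlaw : μ.map X = μ'.map X')
    {C D : Set γ} (hC : MeasurableSet C) (hD : MeasurableSet D) :
    μ[X ⁻¹' D | X ⁻¹' C] = μ'[X' ⁻¹' D | X' ⁻¹' C] := by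
  rw [cond_apply (hX hC), cond_apply (hX' hC), ← Set.preimage_inter, ← Set.preimage_inter,
    ← Measure.map_apply hX hC, ← Measure.map_apply hX (hC.inter hD), hlaw,
    Measure.map_apply hX' hC, Measure.map_apply hX' (hC.inter hD)]

theorem condP_eq_measureReal_cond {μ : Measure Ω} {F : Set Ω} (hF : MeasurableSet F)
    (E : Set Ω) : condP μ E F = (μ[|F]).real E := by
  rw [measureReal_def, cond_apply hF, ENNReal.toReal_mul, ENNReal.toReal_inv, condP,
    Set.inter_comm, div_eq_inv_mul]

theorem measureReal_cond_inter_eq_mul {μ : Measure Ω} [IsFiniteMeasure μ] {E F H : Set Ω}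
    (hF : MeasurableSet F) (hH : MeasurableSet H) {θ : ℝ}
    (h : 0 < μ (H ∩ F) → condP μ E (H ∩ F) = θ) :
    (μ[|F]).real (H ∩ E) = θ * (μ[|F]).real H := by
  rcases (zero_le : 0 ≤ μ (H ∩ F)).eq_or_lt with hHF | hHF
  · have hH0 : μ[|F] H = 0 := by
      rw [cond_apply hF, Set.inter_comm, ← hHF, mul_zero]
    simp [measureReal_def, hH0, measure_mono_null Set.inter_subset_left hH0]
  · rw [← h hHF, condP_eq_measureReal_cond (hH.inter hF), Set.inter_comm H F,
      ← cond_cond_eq_cond_inter hF hH, measureReal_def, measureReal_def, measureReal_def,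
      ← ENNReal.toReal_mul, cond_mul_eq_inter hH]

theorem measureReal_eq_add_of_bool {ν : Measure Ω} [IsFiniteMeasure ν] {X : Ω → Bool}
    (hX : Measurable X) (E : Set Ω) :
    ν.real E = ν.real ({ω | X ω = false} ∩ E) + ν.real ({ω | X ω = true} ∩ E) := by
  rw [← measureReal_inter_add_sdiff (t := {ω | X ω = true}) (hX (.singleton true)), add_comm,
    Set.inter_comm]
  congr 2
  ext ω
  simp [and_comm]

theorem measureReal_stratum_eq_of_marginals {ν : Measure Ω} {ν' : Measure Ω'}
    [IsFiniteMeasure ν] [IsFiniteMeasure ν'] {S₀ S₁ : Ω → Bool} {S₀' S₁' : Ω' → Bool}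
    (hS₀ : Measurable S₀) (hS₁ : Measurable S₁) (hS₀' : Measurable S₀') (hS₁' : Measurable S₁')
    (hmono : ν {ω | S₀ ω = true ∧ S₁ ω = false} = 0)
    (hmono' : ν' {ω | S₀' ω = true ∧ S₁' ω = false} = 0)
    (h₀ : ∀ s, ν.real {ω | S₀ ω = s} = ν'.real {ω | S₀' ω = s})
    (h₁ : ∀ s, ν.real {ω | S₁ ω = s} = ν'.real {ω | S₁' ω = s}) (s₀ s₁ : Bool) :
    ν.real {ω | S₀ ω = s₀ ∧ S₁ ω = s₁} = ν'.real {ω | S₀' ω = s₀ ∧ S₁' ω = s₁} := by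
  have h10 : ν.real {ω | S₀ ω = true ∧ S₁ ω = false} = 0 := by simp [measureReal_def, hmono]
  have h10' : ν'.real {ω | S₀' ω = true ∧ S₁' ω = false} = 0 := by
    simp [measureReal_def, hmono']
  have split₀ : ∀ s, ν.real {ω | S₀ ω = s} =
      ν.real {ω | S₀ ω = s ∧ S₁ ω = false} + ν.real {ω | S₀ ω = s ∧ S₁ ω = true} := fun s => by
    rw [measureReal_eq_add_of_bool hS₁, Set.inter_comm, Set.inter_comm {ω | S₁ ω = true}]; rfl
  have split₀' : ∀ s, ν'.real {ω | S₀' ω = s} =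
      ν'.real {ω | S₀' ω = s ∧ S₁' ω = false} + ν'.real {ω | S₀' ω = s ∧ S₁' ω = true} :=
    fun s => by
      rw [measureReal_eq_add_of_bool hS₁', Set.inter_comm, Set.inter_comm {ω | S₁' ω = true}]
      rfl
  have split₁ : ∀ s, ν.real {ω | S₁ ω = s} =
      ν.real {ω | S₀ ω = false ∧ S₁ ω = s} + ν.real {ω | S₀ ω = true ∧ S₁ ω = s} :=
    fun s => measureReal_eq_add_of_bool hS₀ _
  have split₁' : ∀ s, ν'.real {ω | S₁' ω = s} =
      ν'.real {ω | S₀' ω = false ∧ S₁' ω = s} + ν'.real {ω | S₀' ω = true ∧ S₁' ω = s} :=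
    fun s => measureReal_eq_add_of_bool hS₀' _
  cases s₀ <;> cases s₁
  · linarith [split₁ false, split₁' false, h₁ false]
  · linarith [split₁ true, split₁' true, h₁ true, split₀ true, split₀' true, h₀ true]
  · exact h10.trans h10'.symm
  · linarith [split₀ true, split₀' true, h₀ true]

theorem cond_potential_eq_of_map_eq {ι β : Type*} [MeasurableSpace ι]
    [MeasurableSingletonClass ι] [MeasurableSpace β] {μ : Measure Ω} {μ' : Measure Ω'}
    {G : Ω → ι} {G' : Ω' → ι} {A : Ω → Bool} {A' : Ω' → Bool}
    {V V₀ V₁ : Ω → β} {V' V₀' V₁' : Ω' → β}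
    (hG : Measurable G) (hA : Measurable A) (hV : Measurable V)
    (hG' : Measurable G') (hA' : Measurable A') (hV' : Measurable V')
    (hobs : ∀ ω, V ω = bif A ω then V₁ ω else V₀ ω)
    (hobs' : ∀ ω, V' ω = bif A' ω then V₁' ω else V₀' ω)
    (hlaw : μ.map (fun ω => (G ω, A ω, V ω)) = μ'.map (fun ω => (G' ω, A' ω, V' ω)))
    {g : ι} (hind : IndepFun A (fun ω => (V₀ ω, V₁ ω)) μ[|{ω | G ω = g}])
    (hind' : IndepFun A' (fun ω => (V₀' ω, V₁' ω)) μ'[|{ω | G' ω = g}])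
    {a : Bool} (hpos : μ[|{ω | G ω = g}] {ω | A ω = a} ≠ 0) {B : Set β} (hB : MeasurableSet B) :
    μ[|{ω | G ω = g}] ((bif a then V₁ else V₀) ⁻¹' B) =
      μ'[|{ω | G' ω = g}] ((bif a then V₁' else V₀') ⁻¹' B) := by
  have hX := hG.prodMk (hA.prodMk hV)
  have hX' := hG'.prodMk (hA'.prodMk hV')
  have hC : MeasurableSet {x : ι × Bool × β | x.1 = g} := measurable_fst (.singleton g)
  have harm : μ[|{ω | G ω = g}] {ω | A ω = a} = μ'[|{ω | G' ω = g}] {ω | A' ω = a} := by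
    convert cond_preimage_eq_of_map_eq hX hX' hlaw hC (D := {x | x.2.1 = a})
      (measurable_snd.fst (.singleton a)) using 2 <;> rfl
  have hjoint : μ[|{ω | G ω = g}] ({ω | A ω = a} ∩ V ⁻¹' B) =
      μ'[|{ω | G' ω = g}] ({ω | A' ω = a} ∩ V' ⁻¹' B) := by
    convert cond_preimage_eq_of_map_eq hX hX' hlaw hC (D := {x | x.2.1 = a ∧ x.2.2 ∈ B})
      ((measurable_snd.fst (.singleton a)).inter (measurable_snd.snd hB)) using 2 <;> rfl
  rw [hind.measure_inter_observed_eq_mul hobs a hB,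
    hind'.measure_inter_observed_eq_mul hobs' a hB, ← harm] at hjoint
  exact (ENNReal.mul_right_inj hpos (measure_ne_top _ _)).1 hjoint

theorem measureReal_cond_stratum_inter_eq_mul {ι : Type*} [MeasurableSpace ι]
    [MeasurableSingletonClass ι] {μ : Measure Ω} [IsFiniteMeasure μ] {G : Ω → ι}
    {S₀ S₁ Z : Ω → Bool} (hG : Measurable G) (hS₀ : Measurable S₀) (hS₁ : Measurable S₁)
    {g : ι} {s₀ s₁ : Bool}
    (h : 0 < μ {ω | S₀ ω = s₀ ∧ S₁ ω = s₁ ∧ G ω = g} →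
      condP μ {ω | Z ω = true} {ω | S₀ ω = s₀ ∧ S₁ ω = s₁ ∧ G ω = g} =
        condP μ {ω | Z ω = true} {ω | S₀ ω = s₀ ∧ S₁ ω = s₁}) :
    (μ[|{ω | G ω = g}]).real {ω | S₀ ω = s₀ ∧ S₁ ω = s₁ ∧ Z ω = true} =
      condP μ {ω | Z ω = true} {ω | S₀ ω = s₀ ∧ S₁ ω = s₁} *
        condP μ {ω | S₀ ω = s₀ ∧ S₁ ω = s₁} {ω | G ω = g} := by
  have hF : MeasurableSet {ω | G ω = g} := hG (.singleton g)
  have hH : MeasurableSet {ω | S₀ ω = s₀ ∧ S₁ ω = s₁} :=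
    (hS₀ (.singleton s₀)).inter (hS₁ (.singleton s₁))
  have hassoc (P : Ω → Prop) :
      {ω | S₀ ω = s₀ ∧ S₁ ω = s₁} ∩ {ω | P ω} = {ω | S₀ ω = s₀ ∧ S₁ ω = s₁ ∧ P ω} :=
    Set.ext fun _ => and_assoc
  rw [condP_eq_measureReal_cond hF, ← hassoc]
  exact measureReal_cond_inter_eq_mul hF hH (by rwa [hassoc])

theorem cond_treatment_ne_zero {ι : Type*} [MeasurableSpace ι] [MeasurableSingletonClass ι]
    {μ : Measure Ω} [IsFiniteMeasure μ] {G : Ω → ι} {A : Ω → Bool}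
    (hG : Measurable G) (hA : Measurable A) {g : ι} (hg : 0 < μ {ω | G ω = g})
    (hov : 0 < condP μ {ω | A ω = true} {ω | G ω = g} ∧
      condP μ {ω | A ω = true} {ω | G ω = g} < 1) (a : Bool) :
    μ[|{ω | G ω = g}] {ω | A ω = a} ≠ 0 := by
  have := cond_isProbabilityMeasure (μ := μ) hg.ne'
  rw [condP_eq_measureReal_cond (F := {ω | G ω = g}) (hG (.singleton g))] at hov
  intro h0
  cases a
  · have hcompl : {ω | A ω = true}ᶜ = {ω | A ω = false} := by ext; simp
    rw [← hcompl, prob_compl_eq_zero_iff (s := {ω | A ω = true}) (hA (.singleton true))] at h0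
    simp [measureReal_def, h0] at hov
  · simp [measureReal_def, h0] at hov

end General

/-- The randomization part of Assumption 5 (as `indepFun`) and Assumptions 7 and 8 of the
paper, for a model whose observed values are `S` and `Y`. -/
structure PrincipalStratificationModel {Ω ι : Type*} [MeasurableSpace Ω] [MeasurableSpace ι]
    (μ : Measure Ω) (G : Ω → ι) (A S0 S1 Y0 Y1 S Y : Ω → Bool) : Prop where
  measurable_G : Measurable G
  measurable_A : Measurable A
  measurable_S0 : Measurable S0
  measurable_S1 : Measurable S1
  measurable_Y0 : Measurable Y0
  measurable_Y1 : Measurable Y1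
  S_eq : ∀ ω, S ω = bif A ω then S1 ω else S0 ω
  Y_eq : ∀ ω, Y ω = bif A ω then Y1 ω else Y0 ω
  indepFun : ∀ g, IndepFun A (fun ω => ((S0 ω, Y0 ω), (S1 ω, Y1 ω))) μ[|{ω | G ω = g}]
  homogeneity : ∀ (s0 s1 : Bool) (g : ι), 0 < μ {ω | S0 ω = s0 ∧ S1 ω = s1 ∧ G ω = g} →
    condP μ {ω | Y1 ω = true} {ω | S0 ω = s0 ∧ S1 ω = s1 ∧ G ω = g} =
      condP μ {ω | Y1 ω = true} {ω | S0 ω = s0 ∧ S1 ω = s1} ∧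
    condP μ {ω | Y0 ω = true} {ω | S0 ω = s0 ∧ S1 ω = s1 ∧ G ω = g} =
      condP μ {ω | Y0 ω = true} {ω | S0 ω = s0 ∧ S1 ω = s1}
  monotone : μ {ω | S0 ω = true ∧ S1 ω = false} = 0

namespace PrincipalStratificationModel

variable {Ω Ω' ι : Type*} [MeasurableSpace Ω] [MeasurableSpace Ω'] [MeasurableSpace ι]
  {μ : Measure Ω} {μ' : Measure Ω'}
  {G : Ω → ι} {A S0 S1 Y0 Y1 S Y : Ω → Bool} {G' : Ω' → ι} {A' S0' S1' Y0' Y1' S' Y' : Ω' → Bool}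

theorem of_condP [MeasurableSingletonClass ι] [IsProbabilityMeasure μ] (hG : Measurable G)
    (hA : Measurable A) (hS0 : Measurable S0) (hS1 : Measurable S1) (hY0 : Measurable Y0)
    (hY1 : Measurable Y1)
    (hS : ∀ ω, S ω = bif A ω then S1 ω else S0 ω) (hY : ∀ ω, Y ω = bif A ω then Y1 ω else Y0 ω)
    (hind : ∀ (g : ι) (a s0 s1 y0 y1 : Bool),
      condP μ {ω | A ω = a ∧ S0 ω = s0 ∧ S1 ω = s1 ∧ Y0 ω = y0 ∧ Y1 ω = y1} {ω | G ω = g} =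
        condP μ {ω | A ω = a} {ω | G ω = g} *
          condP μ {ω | S0 ω = s0 ∧ S1 ω = s1 ∧ Y0 ω = y0 ∧ Y1 ω = y1} {ω | G ω = g})
    (hhom : ∀ (s0 s1 : Bool) (g : ι), 0 < μ {ω | S0 ω = s0 ∧ S1 ω = s1 ∧ G ω = g} →
      condP μ {ω | Y1 ω = true} {ω | S0 ω = s0 ∧ S1 ω = s1 ∧ G ω = g} =
        condP μ {ω | Y1 ω = true} {ω | S0 ω = s0 ∧ S1 ω = s1} ∧
      condP μ {ω | Y0 ω = true} {ω | S0 ω = s0 ∧ S1 ω = s1 ∧ G ω = g} =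
        condP μ {ω | Y0 ω = true} {ω | S0 ω = s0 ∧ S1 ω = s1})
    (hmono : μ {ω | S0 ω ≤ S1 ω} = 1) :
    PrincipalStratificationModel μ G A S0 S1 Y0 Y1 S Y where
  measurable_G := hG
  measurable_A := hA
  measurable_S0 := hS0
  measurable_S1 := hS1
  measurable_Y0 := hY0
  measurable_Y1 := hY1
  S_eq := hS
  Y_eq := hY
  indepFun g := by
    refine indepFun_of_measureReal_inter_preimage_singleton hA (by fun_prop) ?_
    rintro a ⟨⟨s0, y0⟩, s1, y1⟩
    have h := hind g a s0 s1 y0 y1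
    have hF : MeasurableSet {ω | G ω = g} := hG (.singleton g)
    simp only [condP_eq_measureReal_cond hF] at h
    have hU : (fun ω => ((S0 ω, Y0 ω), (S1 ω, Y1 ω))) ⁻¹' {((s0, y0), (s1, y1))} =
        {ω | S0 ω = s0 ∧ S1 ω = s1 ∧ Y0 ω = y0 ∧ Y1 ω = y1} := by
      ext ω
      simp only [Set.mem_preimage, Set.mem_singleton_iff, Prod.mk.injEq, Set.mem_ofPred_eq]
      tauto
    rw [hU]
    exact h
  homogeneity := hhom
  monotone := by
    have hms : MeasurableSet {ω | S0 ω ≤ S1 ω} :=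
      (hS0.prodMk hS1) (t := {p : Bool × Bool | p.1 ≤ p.2}) .of_discrete
    refine measure_mono_null (fun ω ⟨h0, h1⟩ => ?_) ((prob_compl_eq_zero_iff hms).2 hmono)
    simp [h0, h1]

theorem measurableSet_G [MeasurableSingletonClass ι]
    (M : PrincipalStratificationModel μ G A S0 S1 Y0 Y1 S Y) (g : ι) :
    MeasurableSet {ω | G ω = g} :=
  M.measurable_G (.singleton g)

theorem observed_eq (M : PrincipalStratificationModel μ G A S0 S1 Y0 Y1 S Y) (ω : Ω) :
    (S ω, Y ω) = bif A ω then (S1 ω, Y1 ω) else (S0 ω, Y0 ω) := by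
  rw [M.S_eq, M.Y_eq]
  cases A ω <;> rfl

theorem measurable_observed (M : PrincipalStratificationModel μ G A S0 S1 Y0 Y1 S Y) :
    Measurable fun ω => (S ω, Y ω) := by
  simpa only [M.observed_eq] using
    M.measurable_A.bif (M.measurable_S0.prodMk M.measurable_Y0)
      (M.measurable_S1.prodMk M.measurable_Y1)

theorem map_eq [Countable ι] [MeasurableSingletonClass ι]
    (M : PrincipalStratificationModel μ G A S0 S1 Y0 Y1 S Y)
    (M' : PrincipalStratificationModel μ' G' A' S0' S1' Y0' Y1' S' Y')
    (hobs : ∀ (g : ι) (a s y : Bool), μ {ω | G ω = g ∧ A ω = a ∧ S ω = s ∧ Y ω = y} =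
      μ' {ω | G' ω = g ∧ A' ω = a ∧ S' ω = s ∧ Y' ω = y}) :
    μ.map (fun ω => (G ω, A ω, S ω, Y ω)) = μ'.map (fun ω => (G' ω, A' ω, S' ω, Y' ω)) := by
  refine Measure.ext_of_singleton fun ⟨g, a, s, y⟩ => ?_
  rw [Measure.map_apply (M.measurable_G.prodMk (M.measurable_A.prodMk M.measurable_observed))
      (.singleton _),
    Measure.map_apply (M'.measurable_G.prodMk (M'.measurable_A.prodMk M'.measurable_observed))
      (.singleton _)]
  simpa only [Set.preimage, Set.mem_singleton_iff, Prod.mk.injEq] using hobs g a s y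

theorem cond_potential_eq [MeasurableSingletonClass ι]
    (M : PrincipalStratificationModel μ G A S0 S1 Y0 Y1 S Y)
    (M' : PrincipalStratificationModel μ' G' A' S0' S1' Y0' Y1' S' Y')
    (hlaw : μ.map (fun ω => (G ω, A ω, S ω, Y ω)) = μ'.map (fun ω => (G' ω, A' ω, S' ω, Y' ω)))
    (hov : ∀ g a, μ[|{ω | G ω = g}] {ω | A ω = a} ≠ 0) (g : ι) (a : Bool)
    (B : Set (Bool × Bool)) :
    μ[|{ω | G ω = g}]
        ((bif a then fun ω => (S1 ω, Y1 ω) else fun ω => (S0 ω, Y0 ω)) ⁻¹' B) =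
      μ'[|{ω | G' ω = g}]
        ((bif a then fun ω => (S1' ω, Y1' ω) else fun ω => (S0' ω, Y0' ω)) ⁻¹' B) :=
  cond_potential_eq_of_map_eq M.measurable_G M.measurable_A M.measurable_observed
    M'.measurable_G M'.measurable_A M'.measurable_observed M.observed_eq M'.observed_eq
    hlaw (M.indepFun g) (M'.indepFun g) (hov g a) .of_discrete

theorem measureReal_cond_potential_eq [MeasurableSingletonClass ι]
    (M : PrincipalStratificationModel μ G A S0 S1 Y0 Y1 S Y)
    (M' : PrincipalStratificationModel μ' G' A' S0' S1' Y0' Y1' S' Y')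
    (hlaw : μ.map (fun ω => (G ω, A ω, S ω, Y ω)) = μ'.map (fun ω => (G' ω, A' ω, S' ω, Y' ω)))
    (hov : ∀ g a, μ[|{ω | G ω = g}] {ω | A ω = a} ≠ 0) (g : ι) (s : Bool) :
    (μ[|{ω | G ω = g}]).real {ω | S0 ω = s} = (μ'[|{ω | G' ω = g}]).real {ω | S0' ω = s} ∧
    (μ[|{ω | G ω = g}]).real {ω | S1 ω = s} = (μ'[|{ω | G' ω = g}]).real {ω | S1' ω = s} ∧
    (μ[|{ω | G ω = g}]).real {ω | S0 ω = s ∧ Y0 ω = true} =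
      (μ'[|{ω | G' ω = g}]).real {ω | S0' ω = s ∧ Y0' ω = true} ∧
    (μ[|{ω | G ω = g}]).real {ω | S1 ω = s ∧ Y1 ω = true} =
      (μ'[|{ω | G' ω = g}]).real {ω | S1' ω = s ∧ Y1' ω = true} := by
  refine ⟨?_, ?_, ?_, ?_⟩ <;> rw [measureReal_def, measureReal_def] <;> congr 1
  · exact M.cond_potential_eq M' hlaw hov g false {p | p.1 = s}
  · exact M.cond_potential_eq M' hlaw hov g true {p | p.1 = s}
  · exact M.cond_potential_eq M' hlaw hov g false {p | p.1 = s ∧ p.2 = true}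
  · exact M.cond_potential_eq M' hlaw hov g true {p | p.1 = s ∧ p.2 = true}

theorem condP_stratum_eq [MeasurableSingletonClass ι]
    (M : PrincipalStratificationModel μ G A S0 S1 Y0 Y1 S Y)
    (M' : PrincipalStratificationModel μ' G' A' S0' S1' Y0' Y1' S' Y')
    (hlaw : μ.map (fun ω => (G ω, A ω, S ω, Y ω)) = μ'.map (fun ω => (G' ω, A' ω, S' ω, Y' ω)))
    (hov : ∀ g a, μ[|{ω | G ω = g}] {ω | A ω = a} ≠ 0) (g : ι) (s0 s1 : Bool) :
    condP μ {ω | S0 ω = s0 ∧ S1 ω = s1} {ω | G ω = g} =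
      condP μ' {ω | S0' ω = s0 ∧ S1' ω = s1} {ω | G' ω = g} := by
  rw [condP_eq_measureReal_cond (M.measurableSet_G g),
    condP_eq_measureReal_cond (M'.measurableSet_G g)]
  exact measureReal_stratum_eq_of_marginals M.measurable_S0 M.measurable_S1 M'.measurable_S0
    M'.measurable_S1 (cond_absolutelyContinuous M.monotone)
    (cond_absolutelyContinuous M'.monotone)
    (fun s => (M.measureReal_cond_potential_eq M' hlaw hov g s).1)
    (fun s => (M.measureReal_cond_potential_eq M' hlaw hov g s).2.1) s0 s1

theorem condP_true_false_eq_zero (M : PrincipalStratificationModel μ G A S0 S1 Y0 Y1 S Y)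
    (g : ι) : condP μ {ω | S0 ω = true ∧ S1 ω = false} {ω | G ω = g} = 0 := by
  simp [condP, measure_mono_null Set.inter_subset_left M.monotone]

theorem measureReal_cond_treated_outcome [IsFiniteMeasure μ] [MeasurableSingletonClass ι]
    (M : PrincipalStratificationModel μ G A S0 S1 Y0 Y1 S Y) (g : ι) (s : Bool) :
    (μ[|{ω | G ω = g}]).real {ω | S1 ω = s ∧ Y1 ω = true} =
      condP μ {ω | Y1 ω = true} {ω | S0 ω = false ∧ S1 ω = s} *
          condP μ {ω | S0 ω = false ∧ S1 ω = s} {ω | G ω = g} +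
        condP μ {ω | Y1 ω = true} {ω | S0 ω = true ∧ S1 ω = s} *
          condP μ {ω | S0 ω = true ∧ S1 ω = s} {ω | G ω = g} := by
  rw [measureReal_eq_add_of_bool M.measurable_S0]
  exact congrArg₂ (· + ·)
    (measureReal_cond_stratum_inter_eq_mul M.measurable_G M.measurable_S0 M.measurable_S1
      fun h => (M.homogeneity false s g h).1)
    (measureReal_cond_stratum_inter_eq_mul M.measurable_G M.measurable_S0 M.measurable_S1
      fun h => (M.homogeneity true s g h).1)

theorem measureReal_cond_control_outcome [IsFiniteMeasure μ] [MeasurableSingletonClass ι]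
    (M : PrincipalStratificationModel μ G A S0 S1 Y0 Y1 S Y) (g : ι) (s : Bool) :
    (μ[|{ω | G ω = g}]).real {ω | S0 ω = s ∧ Y0 ω = true} =
      condP μ {ω | Y0 ω = true} {ω | S0 ω = s ∧ S1 ω = false} *
          condP μ {ω | S0 ω = s ∧ S1 ω = false} {ω | G ω = g} +
        condP μ {ω | Y0 ω = true} {ω | S0 ω = s ∧ S1 ω = true} *
          condP μ {ω | S0 ω = s ∧ S1 ω = true} {ω | G ω = g} := by
  have hcomm (b : Bool) : {ω | S1 ω = b} ∩ {ω | S0 ω = s ∧ Y0 ω = true} =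
      {ω | S0 ω = s ∧ S1 ω = b ∧ Y0 ω = true} := Set.ext fun _ => and_left_comm
  rw [measureReal_eq_add_of_bool M.measurable_S1, hcomm, hcomm]
  exact congrArg₂ (· + ·)
    (measureReal_cond_stratum_inter_eq_mul M.measurable_G M.measurable_S0 M.measurable_S1
      fun h => (M.homogeneity s false g h).2)
    (measureReal_cond_stratum_inter_eq_mul M.measurable_G M.measurable_S0 M.measurable_S1
      fun h => (M.homogeneity s true g h).2)

theorem condP_treated_outcome_eq [IsFiniteMeasure μ] [IsFiniteMeasure μ']
    [MeasurableSingletonClass ι] (M : PrincipalStratificationModel μ G A S0 S1 Y0 Y1 S Y)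
    (M' : PrincipalStratificationModel μ' G' A' S0' S1' Y0' Y1' S' Y')
    (hlaw : μ.map (fun ω => (G ω, A ω, S ω, Y ω)) = μ'.map (fun ω => (G' ω, A' ω, S' ω, Y' ω)))
    (hov : ∀ g a, μ[|{ω | G ω = g}] {ω | A ω = a} ≠ 0)
    (hC4i : (Matrix.of fun (g : ι) (j : Fin 2) =>
      condP μ {ω | S0 ω = (j = 1 : Bool) ∧ S1 ω = true} {ω | G ω = g}).rank = 2)
    (hC4ii : (Matrix.of fun (g : ι) (j : Fin 2) =>
      condP μ {ω | S0 ω = false ∧ S1 ω = (j = 0 : Bool)} {ω | G ω = g}).rank = 2)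
    {s0 s1 : Bool} (hs : (s0, s1) ≠ (true, false)) :
    condP μ {ω | Y1 ω = true} {ω | S0 ω = s0 ∧ S1 ω = s1} =
      condP μ' {ω | Y1' ω = true} {ω | S0' ω = s0 ∧ S1' ω = s1} := by
  have hmix (g : ι) (s : Bool) :
      condP μ {ω | Y1 ω = true} {ω | S0 ω = false ∧ S1 ω = s} *
          condP μ {ω | S0 ω = false ∧ S1 ω = s} {ω | G ω = g} +
        condP μ {ω | Y1 ω = true} {ω | S0 ω = true ∧ S1 ω = s} *
          condP μ {ω | S0 ω = true ∧ S1 ω = s} {ω | G ω = g} =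
      condP μ' {ω | Y1' ω = true} {ω | S0' ω = false ∧ S1' ω = s} *
          condP μ {ω | S0 ω = false ∧ S1 ω = s} {ω | G ω = g} +
        condP μ' {ω | Y1' ω = true} {ω | S0' ω = true ∧ S1' ω = s} *
          condP μ {ω | S0 ω = true ∧ S1 ω = s} {ω | G ω = g} := by
    rw [← M.measureReal_cond_treated_outcome,
      (M.measureReal_cond_potential_eq M' hlaw hov g s).2.2.2, M'.measureReal_cond_treated_outcome,
      M.condP_stratum_eq M' hlaw hov, M.condP_stratum_eq M' hlaw hov]
  obtain ⟨h01, h11⟩ := Matrix.eq_of_rank_eq_two hC4i fun g => by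
    simpa using hmix g true
  have h00 := (Matrix.eq_of_rank_eq_two hC4ii (x₀ := 0) (y₀ := 0) fun g => by
    simpa [M.condP_true_false_eq_zero] using hmix g false).2
  cases s0 <;> cases s1
  exacts [h00, h01, absurd rfl hs, h11]

theorem condP_control_outcome_eq [IsFiniteMeasure μ] [IsFiniteMeasure μ']
    [MeasurableSingletonClass ι] (M : PrincipalStratificationModel μ G A S0 S1 Y0 Y1 S Y)
    (M' : PrincipalStratificationModel μ' G' A' S0' S1' Y0' Y1' S' Y')
    (hlaw : μ.map (fun ω => (G ω, A ω, S ω, Y ω)) = μ'.map (fun ω => (G' ω, A' ω, S' ω, Y' ω)))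
    (hov : ∀ g a, μ[|{ω | G ω = g}] {ω | A ω = a} ≠ 0)
    (hC4i : (Matrix.of fun (g : ι) (j : Fin 2) =>
      condP μ {ω | S0 ω = (j = 1 : Bool) ∧ S1 ω = true} {ω | G ω = g}).rank = 2)
    (hC4ii : (Matrix.of fun (g : ι) (j : Fin 2) =>
      condP μ {ω | S0 ω = false ∧ S1 ω = (j = 0 : Bool)} {ω | G ω = g}).rank = 2)
    {s0 s1 : Bool} (hs : (s0, s1) ≠ (true, false)) :
    condP μ {ω | Y0 ω = true} {ω | S0 ω = s0 ∧ S1 ω = s1} =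
      condP μ' {ω | Y0' ω = true} {ω | S0' ω = s0 ∧ S1' ω = s1} := by
  have hmix (g : ι) (s : Bool) :
      condP μ {ω | Y0 ω = true} {ω | S0 ω = s ∧ S1 ω = false} *
          condP μ {ω | S0 ω = s ∧ S1 ω = false} {ω | G ω = g} +
        condP μ {ω | Y0 ω = true} {ω | S0 ω = s ∧ S1 ω = true} *
          condP μ {ω | S0 ω = s ∧ S1 ω = true} {ω | G ω = g} =
      condP μ' {ω | Y0' ω = true} {ω | S0' ω = s ∧ S1' ω = false} *
          condP μ {ω | S0 ω = s ∧ S1 ω = false} {ω | G ω = g} +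
        condP μ' {ω | Y0' ω = true} {ω | S0' ω = s ∧ S1' ω = true} *
          condP μ {ω | S0 ω = s ∧ S1 ω = true} {ω | G ω = g} := by
    rw [← M.measureReal_cond_control_outcome,
      (M.measureReal_cond_potential_eq M' hlaw hov g s).2.2.1, M'.measureReal_cond_control_outcome,
      M.condP_stratum_eq M' hlaw hov, M.condP_stratum_eq M' hlaw hov]
  obtain ⟨h01, h00⟩ := Matrix.eq_of_rank_eq_two hC4ii fun g => by
    simpa [add_comm] using hmix g false
  have h11 := (Matrix.eq_of_rank_eq_two hC4i (x₀ := 0) (y₀ := 0) fun g => by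
    simpa [M.condP_true_false_eq_zero] using hmix g true).2
  cases s0 <;> cases s1
  exacts [h00, h01, absurd rfl hs, h11]

end PrincipalStratificationModel

theorem stmt9_general
    {Ω Ω' : Type*} [MeasurableSpace Ω] [MeasurableSpace Ω']
    (μ : Measure Ω) (μ' : Measure Ω')
    [IsProbabilityMeasure μ] [IsProbabilityMeasure μ']
    {m : ℕ}
    (G : Ω → Fin m) (A S0 S1 Y0 Y1 S Y : Ω → Bool)
    (G' : Ω' → Fin m) (A' S0' S1' Y0' Y1' S' Y' : Ω' → Bool)
    (hGmeas : Measurable G) (hAmeas : Measurable A)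
    (hS0meas : Measurable S0) (hS1meas : Measurable S1)
    (hY0meas : Measurable Y0) (hY1meas : Measurable Y1)
    (hG'meas : Measurable G') (hA'meas : Measurable A')
    (hS0'meas : Measurable S0') (hS1'meas : Measurable S1')
    (hY0'meas : Measurable Y0') (hY1'meas : Measurable Y1')
    (hSdef : ∀ ω, S ω = bif A ω then S1 ω else S0 ω)
    (hYdef : ∀ ω, Y ω = bif A ω then Y1 ω else Y0 ω)
    (hS'def : ∀ ω, S' ω = bif A' ω then S1' ω else S0' ω)
    (hY'def : ∀ ω, Y' ω = bif A' ω then Y1' ω else Y0' ω)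
    -- Assumption 5 for μ
    (hA5pos : ∀ g : Fin m, 0 < μ {ω | G ω = g})
    (hA5ov : ∀ g : Fin m, 0 < condP μ {ω | A ω = true} {ω | G ω = g} ∧
        condP μ {ω | A ω = true} {ω | G ω = g} < 1)
    (hA5ind : ∀ (g : Fin m) (a s0 s1 y0 y1 : Bool),
      condP μ {ω | A ω = a ∧ S0 ω = s0 ∧ S1 ω = s1 ∧ Y0 ω = y0 ∧ Y1 ω = y1} {ω | G ω = g} =
        condP μ {ω | A ω = a} {ω | G ω = g} *
          condP μ {ω | S0 ω = s0 ∧ S1 ω = s1 ∧ Y0 ω = y0 ∧ Y1 ω = y1} {ω | G ω = g})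
    -- Assumption 5 for μ'
    (hA5ind' : ∀ (g : Fin m) (a s0 s1 y0 y1 : Bool),
      condP μ' {ω | A' ω = a ∧ S0' ω = s0 ∧ S1' ω = s1 ∧ Y0' ω = y0 ∧ Y1' ω = y1}
          {ω | G' ω = g} =
        condP μ' {ω | A' ω = a} {ω | G' ω = g} *
          condP μ' {ω | S0' ω = s0 ∧ S1' ω = s1 ∧ Y0' ω = y0 ∧ Y1' ω = y1} {ω | G' ω = g})
    -- Assumption 7 for μ
    (hA7 : ∀ (s0 s1 : Bool) (g : Fin m), 0 < μ {ω | S0 ω = s0 ∧ S1 ω = s1 ∧ G ω = g} →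
      condP μ {ω | Y1 ω = true} {ω | S0 ω = s0 ∧ S1 ω = s1 ∧ G ω = g} =
        condP μ {ω | Y1 ω = true} {ω | S0 ω = s0 ∧ S1 ω = s1} ∧
      condP μ {ω | Y0 ω = true} {ω | S0 ω = s0 ∧ S1 ω = s1 ∧ G ω = g} =
        condP μ {ω | Y0 ω = true} {ω | S0 ω = s0 ∧ S1 ω = s1})
    -- Assumption 7 for μ'
    (hA7' : ∀ (s0 s1 : Bool) (g : Fin m), 0 < μ' {ω | S0' ω = s0 ∧ S1' ω = s1 ∧ G' ω = g} →
      condP μ' {ω | Y1' ω = true} {ω | S0' ω = s0 ∧ S1' ω = s1 ∧ G' ω = g} =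
        condP μ' {ω | Y1' ω = true} {ω | S0' ω = s0 ∧ S1' ω = s1} ∧
      condP μ' {ω | Y0' ω = true} {ω | S0' ω = s0 ∧ S1' ω = s1 ∧ G' ω = g} =
        condP μ' {ω | Y0' ω = true} {ω | S0' ω = s0 ∧ S1' ω = s1})
    -- Assumption 8 (monotonicity) for μ and μ'
    (hA8 : μ {ω | S0 ω ≤ S1 ω} = 1)
    (hA8' : μ' {ω | S0' ω ≤ S1' ω} = 1)
    -- Condition 4(i): columns P(S⁰=0, S¹=1 | G=g) and P(S⁰=1, S¹=1 | G=g)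
    (hC4i : (Matrix.of fun (g : Fin m) (j : Fin 2) =>
      condP μ {ω | S0 ω = (j = 1 : Bool) ∧ S1 ω = true} {ω | G ω = g}).rank = 2)
    -- Condition 4(ii): columns P(S⁰=0, S¹=1 | G=g) and P(S⁰=0, S¹=0 | G=g)
    (hC4ii : (Matrix.of fun (g : Fin m) (j : Fin 2) =>
      condP μ {ω | S0 ω = false ∧ S1 ω = (j = 0 : Bool)} {ω | G ω = g}).rank = 2)
    -- equal observed data distributions
    (hobs : ∀ (g : Fin m) (a s y : Bool),
      μ {ω | G ω = g ∧ A ω = a ∧ S ω = s ∧ Y ω = y} =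
        μ' {ω | G' ω = g ∧ A' ω = a ∧ S' ω = s ∧ Y' ω = y}) :
    ∀ a b : Bool, (a, b) ≠ (true, false) → ∀ g : Fin m,
      0 < μ {ω | S0 ω = a ∧ S1 ω = b ∧ G ω = g} →
      0 < μ' {ω | S0' ω = a ∧ S1' ω = b ∧ G' ω = g} →
      condP μ {ω | Y1 ω = true} {ω | S0 ω = a ∧ S1 ω = b ∧ G ω = g} -
        condP μ {ω | Y0 ω = true} {ω | S0 ω = a ∧ S1 ω = b ∧ G ω = g} =
      condP μ' {ω | Y1' ω = true} {ω | S0' ω = a ∧ S1' ω = b ∧ G' ω = g} -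
        condP μ' {ω | Y0' ω = true} {ω | S0' ω = a ∧ S1' ω = b ∧ G' ω = g} := by
  intro a b hab g hpos hpos'
  have M := PrincipalStratificationModel.of_condP hGmeas hAmeas hS0meas hS1meas hY0meas hY1meas
    hSdef hYdef hA5ind hA7 hA8
  have M' := PrincipalStratificationModel.of_condP hG'meas hA'meas hS0'meas hS1'meas hY0'meas
    hY1'meas hS'def hY'def hA5ind' hA7' hA8'
  have hlaw := M.map_eq M' hobs
  have hov g := cond_treatment_ne_zero hGmeas hAmeas (hA5pos g) (hA5ov g)
  rw [(hA7 a b g hpos).1, (hA7 a b g hpos).2, (hA7' a b g hpos').1, (hA7' a b g hpos').2,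
    M.condP_treated_outcome_eq M' hlaw hov hC4i hC4ii hab,
    M.condP_control_outcome_eq M' hlaw hov hC4i hC4ii hab]

/-- **Theorem 3(c).** Under Assumptions 5, 7, 8 and both parts of Condition 4, the
principal stratification average causal effects `PSACE_{ab|g}` are identified from the
observed data distribution for all principal strata `(a,b) ∈ {(0,0),(0,1),(1,1)}`. -/
theorem stmt9
    {Ω Ω' : Type*} [MeasurableSpace Ω] [MeasurableSpace Ω']
    (μ : Measure Ω) (μ' : Measure Ω')
    [IsProbabilityMeasure μ] [IsProbabilityMeasure μ']
    {m : ℕ} (hm : 1 ≤ m)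
    (G : Ω → Fin m) (A S0 S1 Y0 Y1 S Y : Ω → Bool)
    (G' : Ω' → Fin m) (A' S0' S1' Y0' Y1' S' Y' : Ω' → Bool)
    (hGmeas : Measurable G) (hAmeas : Measurable A)
    (hS0meas : Measurable S0) (hS1meas : Measurable S1)
    (hY0meas : Measurable Y0) (hY1meas : Measurable Y1)
    (hG'meas : Measurable G') (hA'meas : Measurable A')
    (hS0'meas : Measurable S0') (hS1'meas : Measurable S1')
    (hY0'meas : Measurable Y0') (hY1'meas : Measurable Y1')
    (hSdef : ∀ ω, S ω = bif A ω then S1 ω else S0 ω)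
    (hYdef : ∀ ω, Y ω = bif A ω then Y1 ω else Y0 ω)
    (hS'def : ∀ ω, S' ω = bif A' ω then S1' ω else S0' ω)
    (hY'def : ∀ ω, Y' ω = bif A' ω then Y1' ω else Y0' ω)
    -- Assumption 5 for μ
    (hA5pos : ∀ g : Fin m, 0 < μ {ω | G ω = g})
    (hA5ov : ∀ g : Fin m, 0 < condP μ {ω | A ω = true} {ω | G ω = g} ∧
        condP μ {ω | A ω = true} {ω | G ω = g} < 1)
    (hA5ind : ∀ (g : Fin m) (a s0 s1 y0 y1 : Bool),
      condP μ {ω | A ω = a ∧ S0 ω = s0 ∧ S1 ω = s1 ∧ Y0 ω = y0 ∧ Y1 ω = y1} {ω | G ω = g} =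
        condP μ {ω | A ω = a} {ω | G ω = g} *
          condP μ {ω | S0 ω = s0 ∧ S1 ω = s1 ∧ Y0 ω = y0 ∧ Y1 ω = y1} {ω | G ω = g})
    -- Assumption 5 for μ'
    (hA5pos' : ∀ g : Fin m, 0 < μ' {ω | G' ω = g})
    (hA5ov' : ∀ g : Fin m, 0 < condP μ' {ω | A' ω = true} {ω | G' ω = g} ∧
        condP μ' {ω | A' ω = true} {ω | G' ω = g} < 1)
    (hA5ind' : ∀ (g : Fin m) (a s0 s1 y0 y1 : Bool),
      condP μ' {ω | A' ω = a ∧ S0' ω = s0 ∧ S1' ω = s1 ∧ Y0' ω = y0 ∧ Y1' ω = y1}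
          {ω | G' ω = g} =
        condP μ' {ω | A' ω = a} {ω | G' ω = g} *
          condP μ' {ω | S0' ω = s0 ∧ S1' ω = s1 ∧ Y0' ω = y0 ∧ Y1' ω = y1} {ω | G' ω = g})
    -- Assumption 7 for μ
    (hA7 : ∀ (s0 s1 : Bool) (g : Fin m), 0 < μ {ω | S0 ω = s0 ∧ S1 ω = s1 ∧ G ω = g} →
      condP μ {ω | Y1 ω = true} {ω | S0 ω = s0 ∧ S1 ω = s1 ∧ G ω = g} =
        condP μ {ω | Y1 ω = true} {ω | S0 ω = s0 ∧ S1 ω = s1} ∧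
      condP μ {ω | Y0 ω = true} {ω | S0 ω = s0 ∧ S1 ω = s1 ∧ G ω = g} =
        condP μ {ω | Y0 ω = true} {ω | S0 ω = s0 ∧ S1 ω = s1})
    -- Assumption 7 for μ'
    (hA7' : ∀ (s0 s1 : Bool) (g : Fin m), 0 < μ' {ω | S0' ω = s0 ∧ S1' ω = s1 ∧ G' ω = g} →
      condP μ' {ω | Y1' ω = true} {ω | S0' ω = s0 ∧ S1' ω = s1 ∧ G' ω = g} =
        condP μ' {ω | Y1' ω = true} {ω | S0' ω = s0 ∧ S1' ω = s1} ∧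
      condP μ' {ω | Y0' ω = true} {ω | S0' ω = s0 ∧ S1' ω = s1 ∧ G' ω = g} =
        condP μ' {ω | Y0' ω = true} {ω | S0' ω = s0 ∧ S1' ω = s1})
    -- Assumption 8 (monotonicity) for μ and μ'
    (hA8 : μ {ω | S0 ω ≤ S1 ω} = 1)
    (hA8' : μ' {ω | S0' ω ≤ S1' ω} = 1)
    -- Condition 4(i): columns P(S⁰=0, S¹=1 | G=g) and P(S⁰=1, S¹=1 | G=g)
    (hC4i : (Matrix.of fun (g : Fin m) (j : Fin 2) =>
      condP μ {ω | S0 ω = (j = 1 : Bool) ∧ S1 ω = true} {ω | G ω = g}).rank = 2)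
    (hC4i' : (Matrix.of fun (g : Fin m) (j : Fin 2) =>
      condP μ' {ω | S0' ω = (j = 1 : Bool) ∧ S1' ω = true} {ω | G' ω = g}).rank = 2)
    -- Condition 4(ii): columns P(S⁰=0, S¹=1 | G=g) and P(S⁰=0, S¹=0 | G=g)
    (hC4ii : (Matrix.of fun (g : Fin m) (j : Fin 2) =>
      condP μ {ω | S0 ω = false ∧ S1 ω = (j = 0 : Bool)} {ω | G ω = g}).rank = 2)
    (hC4ii' : (Matrix.of fun (g : Fin m) (j : Fin 2) =>
      condP μ' {ω | S0' ω = false ∧ S1' ω = (j = 0 : Bool)} {ω | G' ω = g}).rank = 2)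
    -- equal observed data distributions
    (hobs : ∀ (g : Fin m) (a s y : Bool),
      μ {ω | G ω = g ∧ A ω = a ∧ S ω = s ∧ Y ω = y} =
        μ' {ω | G' ω = g ∧ A' ω = a ∧ S' ω = s ∧ Y' ω = y}) :
    ∀ a b : Bool, (a, b) ≠ (true, false) → ∀ g : Fin m,
      0 < μ {ω | S0 ω = a ∧ S1 ω = b ∧ G ω = g} →
      0 < μ' {ω | S0' ω = a ∧ S1' ω = b ∧ G' ω = g} →
      condP μ {ω | Y1 ω = true} {ω | S0 ω = a ∧ S1 ω = b ∧ G ω = g} -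
        condP μ {ω | Y0 ω = true} {ω | S0 ω = a ∧ S1 ω = b ∧ G ω = g} =
      condP μ' {ω | Y1' ω = true} {ω | S0' ω = a ∧ S1' ω = b ∧ G' ω = g} -
        condP μ' {ω | Y0' ω = true} {ω | S0' ω = a ∧ S1' ω = b ∧ G' ω = g} :=
  stmt9_general μ μ' G A S0 S1 Y0 Y1 S Y G' A' S0' S1' Y0' Y1' S' Y' hGmeas hAmeas hS0meas hS1meas
    hY0meas hY1meas hG'meas hA'meas hS0'meas hS1'meas hY0'meas hY1'meas hSdef hYdef hS'def hY'def
    hA5pos hA5ov hA5ind hA5ind' hA7 hA7' hA8 hA8' hC4i hC4ii hobs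
end

section
/- Identification of the boundary principal-stratum outcome probabilities (Step 2 identities): Under Assumptions 5, 7, and 8, for every g ∈ Fin m: (i) if μ(S¹=0, G=g) > 0 and μ(S⁰=0, S¹=0) > 0, then P(Y¹=1 | S⁰=0, S¹=0) = P(Y=1 | S=0, A=1, G=g); (ii) if μ(S⁰=1, G=g) > 0 and μ(S⁰=1, S¹=1) > 0, then P(Y⁰=1 | S⁰=1, S¹=1) = P(Y=1 | S=1, A=0, G=g). -/
/-!
Monotonicity makes the observed cell `{S = 0, A = 1}` coincide almost surely with
`{A = 1, S⁰ = S¹ = 0}`, on which `Y = Y¹` (and `{S = 1, A = 0}` with `{A = 0, S⁰ = S¹ = 1}`, on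
which `Y = Y⁰`). Within trial `g` the treatment is independent of `(S⁰, S¹, Y⁰, Y¹)`, so
additionally conditioning on `A` does not change the probability of an event of the potential
variables given the stratum; Assumption 7 then removes the conditioning on `G = g`.
-/

open MeasureTheory ProbabilityTheory

section condP

variable {Ω : Type*} [MeasurableSpace Ω] {μ : Measure Ω} {E E' F F' : Set Ω}

lemma condP_eq_toReal_cond (hF : MeasurableSet F) : condP μ E F = (μ[E|F]).toReal := by
  rw [condP, cond_apply hF, ENNReal.toReal_mul, ENNReal.toReal_inv, Set.inter_comm,
    inv_mul_eq_div]

lemma condP_cond [IsFiniteMeasure μ] (hF : MeasurableSet F) (hF₀ : μ F ≠ 0) (B : Set Ω) :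
    condP μ[|F] E B = condP μ E (B ∩ F) := by
  have hc : ((μ F)⁻¹).toReal ≠ 0 :=
    ENNReal.toReal_ne_zero.2 ⟨ENNReal.inv_ne_zero.2 (measure_ne_top μ F), ENNReal.inv_ne_top.2 hF₀⟩
  rw [condP, condP, cond_apply hF, cond_apply hF, ENNReal.toReal_mul, ENNReal.toReal_mul,
    mul_div_mul_left _ _ hc, Set.inter_comm F, Set.inter_comm F, Set.inter_assoc]

lemma condP_congr_ae (hEF : (E ∩ F : Set Ω) =ᵐ[μ] (E' ∩ F' : Set Ω)) (hF : F =ᵐ[μ] F') :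
    condP μ E F = condP μ E' F' := by
  rw [condP, condP, measure_congr hEF, measure_congr hF]

end condP

section indep

variable {Ω α β : Type*} [MeasurableSpace Ω] {μ : Measure Ω} [MeasurableSpace α] [MeasurableSpace β]
  {f : Ω → α} {g : Ω → β}

lemma indepFun_of_measure_inter_preimage_singleton [IsFiniteMeasure μ]
    [Countable α] [Countable β] [MeasurableSingletonClass α] [MeasurableSingletonClass β]
    (hf : Measurable f) (hg : Measurable g)
    (h : ∀ a b, μ (f ⁻¹' {a} ∩ g ⁻¹' {b}) = μ (f ⁻¹' {a}) * μ (g ⁻¹' {b})) :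
    IndepFun f g μ := by
  rw [indepFun_iff_map_prod_eq_prod_map_map hf.aemeasurable hg.aemeasurable]
  refine Measure.ext_of_singleton fun ⟨a, b⟩ => ?_
  rw [← Set.singleton_prod_singleton, Measure.prod_prod, Measure.map_apply (hf.prodMk hg)
    ((measurableSet_singleton a).prod (measurableSet_singleton b)),
    Measure.map_apply hf (measurableSet_singleton a),
    Measure.map_apply hg (measurableSet_singleton b), Set.mk_preimage_prod, h]

lemma IndepFun.condP_inter_preimage [IsFiniteMeasure μ] (hfg : IndepFun f g μ) {s : Set α}
    {t u : Set β} (hs : MeasurableSet s) (ht : MeasurableSet t) (hu : MeasurableSet u)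
    (hμs : μ (f ⁻¹' s) ≠ 0) :
    condP μ (g ⁻¹' t) (f ⁻¹' s ∩ g ⁻¹' u) = condP μ (g ⁻¹' t) (g ⁻¹' u) := by
  have hc : (μ (f ⁻¹' s)).toReal ≠ 0 := ENNReal.toReal_ne_zero.2 ⟨hμs, measure_ne_top μ _⟩
  rw [condP, condP, Set.inter_left_comm, ← Set.preimage_inter,
    hfg.measure_inter_preimage_eq_mul _ _ hs (ht.inter hu),
    hfg.measure_inter_preimage_eq_mul _ _ hs hu, ENNReal.toReal_mul, ENNReal.toReal_mul,
    mul_div_mul_left _ _ hc, Set.preimage_inter]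

end indep

lemma Bool.cond_eq_not_iff_of_le {a s₀ s₁ : Bool} (h : s₀ ≤ s₁) :
    (bif a then s₁ else s₀) = !a ↔ s₀ = !a ∧ s₁ = !a := by
  revert h; cases a <;> cases s₀ <;> cases s₁ <;> decide

section PrincipalStrata

variable {Ω : Type*} [MeasurableSpace Ω] {μ : Measure Ω} {A S0 S1 Y0 Y1 : Ω → Bool}

lemma indepFun_cond_of_condP_eq_mul {F : Set Ω} (hF : MeasurableSet F) (hA : Measurable A)
    (hS0 : Measurable S0) (hS1 : Measurable S1) (hY0 : Measurable Y0) (hY1 : Measurable Y1)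
    (h : ∀ a s0 s1 y0 y1 : Bool,
      condP μ {ω | A ω = a ∧ S0 ω = s0 ∧ S1 ω = s1 ∧ Y0 ω = y0 ∧ Y1 ω = y1} F =
        condP μ {ω | A ω = a} F * condP μ {ω | S0 ω = s0 ∧ S1 ω = s1 ∧ Y0 ω = y0 ∧ Y1 ω = y1} F) :
    IndepFun A (fun ω => (S0 ω, S1 ω, Y0 ω, Y1 ω)) μ[|F] := by
  refine indepFun_of_measure_inter_preimage_singleton hA
    (hS0.prodMk (hS1.prodMk (hY0.prodMk hY1))) fun a ⟨s0, s1, y0, y1⟩ => ?_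
  have hs := h a s0 s1 y0 y1
  simp only [condP_eq_toReal_cond hF, ← ENNReal.toReal_mul] at hs
  rw [ENNReal.toReal_eq_toReal_iff' (measure_ne_top _ _)
    (ENNReal.mul_ne_top (measure_ne_top _ _) (measure_ne_top _ _))] at hs
  convert hs using 3 <;> ext ω <;> simp

variable {m : ℕ} {G : Ω → Fin m} {S Y : Ω → Bool}

/-- `a` is the treatment arm: `a = true` is part (i), with stratum `S⁰ = S¹ = 0` and outcome `Y¹`,
and `a = false` is part (ii), with stratum `S⁰ = S¹ = 1` and outcome `Y⁰`. -/
lemma condP_potential_eq_condP_observed [IsFiniteMeasure μ] (a : Bool) {g : Fin m}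
    (hG : Measurable G)
    (hSdef : ∀ ω, S ω = bif A ω then S1 ω else S0 ω)
    (hYdef : ∀ ω, Y ω = bif A ω then Y1 ω else Y0 ω)
    (hind : IndepFun A (fun ω => (S0 ω, S1 ω, Y0 ω, Y1 ω)) μ[|{ω | G ω = g}])
    (hAa : μ[{ω | A ω = a} | {ω | G ω = g}] ≠ 0)
    (hmono : ∀ᵐ ω ∂μ, S0 ω ≤ S1 ω)
    (hA7 : 0 < μ {ω | S0 ω = !a ∧ S1 ω = !a ∧ G ω = g} →
      condP μ {ω | (bif a then Y1 ω else Y0 ω) = true} {ω | S0 ω = !a ∧ S1 ω = !a ∧ G ω = g} =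
        condP μ {ω | (bif a then Y1 ω else Y0 ω) = true} {ω | S0 ω = !a ∧ S1 ω = !a})
    (hpos : 0 < μ {ω | (bif a then S1 ω else S0 ω) = !a ∧ G ω = g}) :
    condP μ {ω | (bif a then Y1 ω else Y0 ω) = true} {ω | S0 ω = !a ∧ S1 ω = !a} =
      condP μ {ω | Y ω = true} {ω | S ω = !a ∧ A ω = a ∧ G ω = g} := by
  set V : Ω → Bool × Bool × Bool × Bool := fun ω => (S0 ω, S1 ω, Y0 ω, Y1 ω)
  set F := {ω | G ω = g}
  have hF : MeasurableSet F := hG (measurableSet_singleton g)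
  have hstratum : {ω | (bif a then S1 ω else S0 ω) = !a ∧ G ω = g} =ᵐ[μ]
      {ω | S0 ω = !a ∧ S1 ω = !a ∧ G ω = g} := by
    refine Filter.eventuallyEq_set.2 (hmono.mono fun ω h => ?_)
    simp only [Set.mem_ofPred_eq, Bool.cond_eq_not_iff_of_le h, and_assoc]
  have hpos' := hpos.trans_eq (measure_congr hstratum)
  have hF₀ : μ F ≠ 0 := ne_bot_of_le_ne_bot hpos'.ne' (measure_mono fun ω h => h.2.2)
  set T : Set (Bool × Bool × Bool × Bool) := {v | (bif a then v.2.2.2 else v.2.2.1) = true}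
  set U : Set (Bool × Bool × Bool × Bool) := {v | v.1 = !a ∧ v.2.1 = !a}
  calc condP μ {ω | (bif a then Y1 ω else Y0 ω) = true} {ω | S0 ω = !a ∧ S1 ω = !a}
      = condP μ (V ⁻¹' T) (V ⁻¹' U ∩ F) := by
        rw [← hA7 hpos']
        congr 1
        ext ω
        simp [V, U, F, and_assoc]
    _ = condP μ[|F] (V ⁻¹' T) (V ⁻¹' U) := (condP_cond hF hF₀ _).symm
    _ = condP μ[|F] (V ⁻¹' T) (A ⁻¹' {a} ∩ V ⁻¹' U) :=
        (IndepFun.condP_inter_preimage hind (measurableSet_singleton a) .of_discrete .of_discrete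
          hAa).symm
    _ = condP μ (V ⁻¹' T) (A ⁻¹' {a} ∩ V ⁻¹' U ∩ F) := condP_cond hF hF₀ _
    _ = condP μ {ω | Y ω = true} {ω | S ω = !a ∧ A ω = a ∧ G ω = g} := by
        refine condP_congr_ae ?_ ?_ <;>
          refine Filter.eventuallyEq_set.2 (hmono.mono fun ω h => ?_) <;>
          by_cases hAω : A ω = a <;>
          simp [V, T, U, F, hSdef, hYdef, hAω, Bool.cond_eq_not_iff_of_le h]

end PrincipalStrata

theorem stmt15_general
    {Ω : Type*} [MeasurableSpace Ω] (μ : Measure Ω) [IsProbabilityMeasure μ]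
    {m : ℕ}
    (G : Ω → Fin m) (A S0 S1 Y0 Y1 S Y : Ω → Bool)
    (hGmeas : Measurable G) (hAmeas : Measurable A)
    (hS0meas : Measurable S0) (hS1meas : Measurable S1)
    (hY0meas : Measurable Y0) (hY1meas : Measurable Y1)
    (hSdef : ∀ ω, S ω = bif A ω then S1 ω else S0 ω)
    (hYdef : ∀ ω, Y ω = bif A ω then Y1 ω else Y0 ω)
    -- Assumption 5
    (hA5pos : ∀ g : Fin m, 0 < μ {ω | G ω = g})
    (hA5ov : ∀ g : Fin m, 0 < condP μ {ω | A ω = true} {ω | G ω = g} ∧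
        condP μ {ω | A ω = true} {ω | G ω = g} < 1)
    (hA5ind : ∀ (g : Fin m) (a s0 s1 y0 y1 : Bool),
      condP μ {ω | A ω = a ∧ S0 ω = s0 ∧ S1 ω = s1 ∧ Y0 ω = y0 ∧ Y1 ω = y1} {ω | G ω = g} =
        condP μ {ω | A ω = a} {ω | G ω = g} *
          condP μ {ω | S0 ω = s0 ∧ S1 ω = s1 ∧ Y0 ω = y0 ∧ Y1 ω = y1} {ω | G ω = g})
    -- Assumption 7
    (hA7 : ∀ (s0 s1 : Bool) (g : Fin m), 0 < μ {ω | S0 ω = s0 ∧ S1 ω = s1 ∧ G ω = g} →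
      condP μ {ω | Y1 ω = true} {ω | S0 ω = s0 ∧ S1 ω = s1 ∧ G ω = g} =
        condP μ {ω | Y1 ω = true} {ω | S0 ω = s0 ∧ S1 ω = s1} ∧
      condP μ {ω | Y0 ω = true} {ω | S0 ω = s0 ∧ S1 ω = s1 ∧ G ω = g} =
        condP μ {ω | Y0 ω = true} {ω | S0 ω = s0 ∧ S1 ω = s1})
    -- Assumption 8 (monotonicity)
    (hA8 : μ {ω | S0 ω ≤ S1 ω} = 1) :
    ∀ g : Fin m,
      (0 < μ {ω | S1 ω = false ∧ G ω = g} → 0 < μ {ω | S0 ω = false ∧ S1 ω = false} →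
        condP μ {ω | Y1 ω = true} {ω | S0 ω = false ∧ S1 ω = false} =
          condP μ {ω | Y ω = true} {ω | S ω = false ∧ A ω = true ∧ G ω = g}) ∧
      (0 < μ {ω | S0 ω = true ∧ G ω = g} → 0 < μ {ω | S0 ω = true ∧ S1 ω = true} →
        condP μ {ω | Y0 ω = true} {ω | S0 ω = true ∧ S1 ω = true} =
          condP μ {ω | Y ω = true} {ω | S ω = true ∧ A ω = false ∧ G ω = g}) := by
  intro g
  have hF : MeasurableSet {ω | G ω = g} := hGmeas (measurableSet_singleton g)
  have := cond_isProbabilityMeasure (hA5pos g).ne'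
  have hind := indepFun_cond_of_condP_eq_mul hF hAmeas hS0meas hS1meas hY0meas hY1meas (hA5ind g)
  have hle : MeasurableSet {ω | S0 ω ≤ S1 ω} :=
    hS0meas.prodMk hS1meas (.of_discrete (s := {p : Bool × Bool | p.1 ≤ p.2}))
  have hmono : ∀ᵐ ω ∂μ, S0 ω ≤ S1 ω :=
    (ae_iff_measure_eq hle.nullMeasurableSet).2 (hA8.trans measure_univ.symm)
  obtain ⟨hA1_pos, hA1_lt_one⟩ := hA5ov g
  rw [condP_eq_toReal_cond hF] at hA1_pos hA1_lt_one
  have hA0 : μ[{ω | A ω = false} | {ω | G ω = g}] ≠ 0 := by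
    rw [show {ω | A ω = false} = {ω | A ω = true}ᶜ by ext; simp, Ne,
      prob_compl_eq_zero_iff (s := {ω | A ω = true}) (hAmeas (measurableSet_singleton true))]
    intro h
    simp [h] at hA1_lt_one
  exact ⟨fun hpos _ => condP_potential_eq_condP_observed true hGmeas hSdef hYdef hind
      (ENNReal.toReal_pos_iff.1 hA1_pos).1.ne' hmono (fun h => (hA7 false false g h).1) hpos,
    fun hpos _ => condP_potential_eq_condP_observed false hGmeas hSdef hYdef hind hA0 hmono
      (fun h => (hA7 true true g h).2) hpos⟩

/-- **Identification of the boundary principal-stratum outcome probabilities (Step 2).**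
Under Assumptions 5, 7 and 8, for every `g`:
(i) if `μ(S¹=0, G=g) > 0` and `μ(S⁰=0, S¹=0) > 0` then
`P(Y¹=1 | S⁰=0, S¹=0) = P(Y=1 | S=0, A=1, G=g)`;
(ii) if `μ(S⁰=1, G=g) > 0` and `μ(S⁰=1, S¹=1) > 0` then
`P(Y⁰=1 | S⁰=1, S¹=1) = P(Y=1 | S=1, A=0, G=g)`. -/
theorem stmt15
    {Ω : Type*} [MeasurableSpace Ω] (μ : Measure Ω) [IsProbabilityMeasure μ]
    {m : ℕ} (hm : 1 ≤ m)
    (G : Ω → Fin m) (A S0 S1 Y0 Y1 S Y : Ω → Bool)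
    (hGmeas : Measurable G) (hAmeas : Measurable A)
    (hS0meas : Measurable S0) (hS1meas : Measurable S1)
    (hY0meas : Measurable Y0) (hY1meas : Measurable Y1)
    (hSdef : ∀ ω, S ω = bif A ω then S1 ω else S0 ω)
    (hYdef : ∀ ω, Y ω = bif A ω then Y1 ω else Y0 ω)
    -- Assumption 5
    (hA5pos : ∀ g : Fin m, 0 < μ {ω | G ω = g})
    (hA5ov : ∀ g : Fin m, 0 < condP μ {ω | A ω = true} {ω | G ω = g} ∧
        condP μ {ω | A ω = true} {ω | G ω = g} < 1)
    (hA5ind : ∀ (g : Fin m) (a s0 s1 y0 y1 : Bool),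
      condP μ {ω | A ω = a ∧ S0 ω = s0 ∧ S1 ω = s1 ∧ Y0 ω = y0 ∧ Y1 ω = y1} {ω | G ω = g} =
        condP μ {ω | A ω = a} {ω | G ω = g} *
          condP μ {ω | S0 ω = s0 ∧ S1 ω = s1 ∧ Y0 ω = y0 ∧ Y1 ω = y1} {ω | G ω = g})
    -- Assumption 7
    (hA7 : ∀ (s0 s1 : Bool) (g : Fin m), 0 < μ {ω | S0 ω = s0 ∧ S1 ω = s1 ∧ G ω = g} →
      condP μ {ω | Y1 ω = true} {ω | S0 ω = s0 ∧ S1 ω = s1 ∧ G ω = g} =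
        condP μ {ω | Y1 ω = true} {ω | S0 ω = s0 ∧ S1 ω = s1} ∧
      condP μ {ω | Y0 ω = true} {ω | S0 ω = s0 ∧ S1 ω = s1 ∧ G ω = g} =
        condP μ {ω | Y0 ω = true} {ω | S0 ω = s0 ∧ S1 ω = s1})
    -- Assumption 8 (monotonicity)
    (hA8 : μ {ω | S0 ω ≤ S1 ω} = 1) :
    ∀ g : Fin m,
      (0 < μ {ω | S1 ω = false ∧ G ω = g} → 0 < μ {ω | S0 ω = false ∧ S1 ω = false} →
        condP μ {ω | Y1 ω = true} {ω | S0 ω = false ∧ S1 ω = false} =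
          condP μ {ω | Y ω = true} {ω | S ω = false ∧ A ω = true ∧ G ω = g}) ∧
      (0 < μ {ω | S0 ω = true ∧ G ω = g} → 0 < μ {ω | S0 ω = true ∧ S1 ω = true} →
        condP μ {ω | Y0 ω = true} {ω | S0 ω = true ∧ S1 ω = true} =
          condP μ {ω | Y ω = true} {ω | S ω = true ∧ A ω = false ∧ G ω = g}) :=
  stmt15_general μ G A S0 S1 Y0 Y1 S Y hGmeas hAmeas hS0meas hS1meas hY0meas hY1meas hSdef hYdef
    hA5pos hA5ov hA5ind hA7 hA8
end
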